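/- Let P be a real polynomial of degree n ≥ 2 such that for every j ∈ {1, ..., n-1}, the Wronskian (P^{(n-j-1)})'(x) · P^{(n-j)}(x) - (P^{(n-j)})'(x) · P^{(n-j-1)}(x) > 0 for all real x. Then P has n distinct real roots. -/

import Mathlib

/-!
For `Q = P^{(k)}` the hypothesis reads `Q'² - Q Q'' > 0`, so `Q'/Q` has negative derivative and is
strictly decreasing on every interval free of roots of `Q`. As `Q'/Q` vanishes at the roots of `Q'`
and tends to `0` at `±∞`, `Q` has a root strictly between any two roots of `Q'`, one to the left
of the smallest and one to the right of the largest. So if `Q'` has `deg Q'` distinct real roots,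
`Q` has `deg Q` of them; descending induction from the linear `P^{(n-1)}` reaches `P`.
-/

open Polynomial Filter Set

namespace Polynomial

theorem natDegree_iterate_derivative_eq {R : Type*} [Semiring R] [IsAddTorsionFree R]
    (p : R[X]) (k : ℕ) : (derivative^[k] p).natDegree = p.natDegree - k := by
  induction k with
  | zero => rfl
  | succ k ih => rw [Function.iterate_succ_apply', natDegree_derivative, ih, Nat.sub_sub]

theorem card_roots_eq_natDegree_and_nodup {R : Type*} [CommRing R] [IsDomain R] [DecidableEq R]
    {p : R[X]} (h : p.natDegree ≤ p.roots.toFinset.card) :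
    p.roots.card = p.natDegree ∧ p.roots.Nodup := by
  have h₁ := p.roots.toFinset_card_le
  have h₂ := p.card_roots'
  exact ⟨by omega, Multiset.toFinset_card_eq_card_iff_nodup.1 (by omega)⟩

variable {Q : ℝ[X]}

theorem eval_ne_zero_of_wronskian_pos {x : ℝ} (hW : 0 < (wronskian (derivative Q) Q).eval x)
    (hx : (derivative Q).eval x = 0) : Q.eval x ≠ 0 := by
  intro h
  simp [wronskian, hx, h] at hW

theorem strictAntiOn_eval_derivative_div_eval {D : Set ℝ} (hD : Convex ℝ D)
    (hW : ∀ x ∈ D, 0 < (wronskian (derivative Q) Q).eval x) (hQ : ∀ x ∈ D, Q.eval x ≠ 0) :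
    StrictAntiOn (fun x => (derivative Q).eval x / Q.eval x) D := by
  refine strictAntiOn_of_deriv_neg hD
    ((derivative Q).continuousOn.div Q.continuousOn hQ) fun x hx => ?_
  have hxD := interior_subset hx
  have hderiv : HasDerivAt (fun y => (derivative Q).eval y / Q.eval y) _ x :=
    ((derivative Q).hasDerivAt x).div (Q.hasDerivAt x) (hQ x hxD)
  rw [hderiv.deriv]
  have hWx := hW x hxD
  simp only [wronskian, eval_sub, eval_mul] at hWx
  exact div_neg_of_neg_of_pos (by linarith) (by positivity [hQ x hxD])

theorem exists_isRoot_mem_Ioo_of_wronskian_pos {a b : ℝ} (hab : a < b)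
    (hW : ∀ x ∈ Icc a b, 0 < (wronskian (derivative Q) Q).eval x)
    (ha : (derivative Q).eval a = 0) (hb : (derivative Q).eval b = 0) :
    ∃ x ∈ Ioo a b, Q.IsRoot x := by
  by_contra! h
  have hQ : ∀ x ∈ Icc a b, Q.eval x ≠ 0 := by
    intro x hx
    rcases eq_endpoints_or_mem_Ioo_of_mem_Icc hx with rfl | rfl | hx'
    · exact eval_ne_zero_of_wronskian_pos (hW _ hx) ha
    · exact eval_ne_zero_of_wronskian_pos (hW _ hx) hb
    · exact h x hx'
  have := strictAntiOn_eval_derivative_div_eval (convex_Icc a b) hW hQ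
    (left_mem_Icc.2 hab.le) (right_mem_Icc.2 hab.le) hab
  simp [ha, hb] at this

theorem exists_isRoot_gt_of_wronskian_pos {a : ℝ}
    (hW : ∀ x ∈ Ici a, 0 < (wronskian (derivative Q) Q).eval x)
    (ha : (derivative Q).eval a = 0) : ∃ x, a < x ∧ Q.IsRoot x := by
  by_contra! h
  have hQ : ∀ x ∈ Ici a, Q.eval x ≠ 0 := by
    intro x hx
    rcases (mem_Ici.1 hx).eq_or_lt with rfl | hx
    · exact eval_ne_zero_of_wronskian_pos (hW _ self_mem_Ici) ha
    · exact h x hx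
  have hQ0 : Q ≠ 0 := fun h0 => hQ a self_mem_Ici (by simp [h0])
  have hanti := strictAntiOn_eval_derivative_div_eval (convex_Ici a) hW hQ
  have hneg : (derivative Q).eval (a + 1) / Q.eval (a + 1) < 0 := by
    simpa [ha] using hanti self_mem_Ici (by simp : a + 1 ∈ Ici a) (lt_add_one a)
  have hlim := div_tendsto_atTop_zero_of_degree_lt _ _ (degree_derivative_lt hQ0)
  obtain ⟨x, hx, hxa⟩ :=
    ((hlim.eventually (lt_mem_nhds hneg)).and (eventually_gt_atTop (a + 1))).exists
  exact hx.not_gt (hanti (by simp) (by simp; linarith) hxa)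

theorem exists_isRoot_lt_of_wronskian_pos {b : ℝ}
    (hW : ∀ x ∈ Iic b, 0 < (wronskian (derivative Q) Q).eval x)
    (hb : (derivative Q).eval b = 0) : ∃ x, x < b ∧ Q.IsRoot x := by
  by_contra! h
  have hQ : ∀ x ∈ Iic b, Q.eval x ≠ 0 := by
    intro x hx
    rcases (mem_Iic.1 hx).eq_or_lt with rfl | hx
    · exact eval_ne_zero_of_wronskian_pos (hW _ self_mem_Iic) hb
    · exact h x hx
  have hQ0 : Q ≠ 0 := fun h0 => hQ b self_mem_Iic (by simp [h0])
  have hanti := strictAntiOn_eval_derivative_div_eval (convex_Iic b) hW hQ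
  have hpos : 0 < (derivative Q).eval (b - 1) / Q.eval (b - 1) := by
    simpa [hb] using hanti (by simp : b - 1 ∈ Iic b) self_mem_Iic (sub_one_lt b)
  have hlim := div_tendsto_atBot_zero_of_degree_lt _ _ (degree_derivative_lt hQ0)
  obtain ⟨x, hx, hxb⟩ :=
    ((hlim.eventually (gt_mem_nhds hpos)).and (eventually_lt_atBot (b - 1))).exists
  exact hx.not_gt (hanti (by simp; linarith) (by simp) hxb)

theorem natDegree_le_card_roots_toFinset_of_wronskian_pos
    (hW : ∀ x, 0 < (wronskian (derivative Q) Q).eval x)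
    (hQ' : (derivative Q).natDegree ≤ (derivative Q).roots.toFinset.card)
    (hdeg : 0 < (derivative Q).natDegree) :
    Q.natDegree ≤ Q.roots.toFinset.card := by
  classical
  set s := (derivative Q).roots.toFinset
  have hQ'0 : derivative Q ≠ 0 := fun h => by simp [h] at hdeg
  have hQ0 : Q ≠ 0 := fun h => by simp [h] at hQ'0
  have hs : s.Nonempty := Finset.card_pos.1 (by omega)
  have hs_root : ∀ x ∈ s, (derivative Q).eval x = 0 := fun x hx => by simpa [s, hQ'0] using hx
  have ht_mem : ∀ {x}, Q.IsRoot x → x ∈ Q.roots.toFinset := fun hx => by simpa [hQ0] using hx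
  set t₀ := Q.roots.toFinset.filter (· ∈ Ioo (s.min' hs) (s.max' hs))
  have h_interleaved : s.card ≤ t₀.card + 1 := by
    refine Finset.card_le_of_interleaved fun x hx y hy hxy _ => ?_
    obtain ⟨z, hz, hzroot⟩ := exists_isRoot_mem_Ioo_of_wronskian_pos hxy (fun x _ => hW x)
      (hs_root x hx) (hs_root y hy)
    exact ⟨z, Finset.mem_filter.2 ⟨ht_mem hzroot, (s.min'_le x hx).trans_lt hz.1,
      hz.2.trans_le (s.le_max' y hy)⟩, hz⟩
  obtain ⟨l, hl, hlroot⟩ :=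
    exists_isRoot_lt_of_wronskian_pos (fun x _ => hW x) (hs_root _ (s.min'_mem hs))
  obtain ⟨r, hr, hrroot⟩ :=
    exists_isRoot_gt_of_wronskian_pos (fun x _ => hW x) (hs_root _ (s.max'_mem hs))
  have hl₀ : l ∉ t₀ := fun h => (Finset.mem_filter.1 h).2.1.not_gt hl
  have hr₀ : r ∉ t₀ := fun h => (Finset.mem_filter.1 h).2.2.not_gt hr
  have hlr : l ∉ insert r t₀ := by
    rw [Finset.mem_insert, not_or]
    exact ⟨((hl.trans_le (s.min'_le_max' hs)).trans hr).ne, hl₀⟩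
  have hsub : insert l (insert r t₀) ⊆ Q.roots.toFinset :=
    Finset.insert_subset (ht_mem hlroot) <|
      Finset.insert_subset (ht_mem hrroot) (Finset.filter_subset _ _)
  have := Finset.card_le_card hsub
  rw [Finset.card_insert_of_notMem hlr, Finset.card_insert_of_notMem hr₀] at this
  rw [natDegree_derivative] at hQ' hdeg
  omega

end Polynomial

theorem wronskian_all_levels (n : ℕ) (hn : 2 ≤ n) (P : ℝ[X]) (hdeg : P.natDegree = n)
    (hW : ∀ j ∈ Finset.Icc 1 (n - 1), ∀ x : ℝ,
      ((derivative (derivative^[n - j - 1] P)).eval x) * ((derivative^[n - j] P).eval x) -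
        ((derivative (derivative^[n - j] P)).eval x) * ((derivative^[n - j - 1] P).eval x) > 0) :
    P.roots.card = n ∧ P.roots.Nodup := by
  have hdegk (k : ℕ) : (derivative^[k] P).natDegree = n - k := by
    rw [natDegree_iterate_derivative_eq, hdeg]
  have key (k : ℕ) (hk : k ≤ n - 1) :
      (derivative^[k] P).natDegree ≤ (derivative^[k] P).roots.toFinset.card := by
    induction hk using Nat.decreasingInduction with
    | self =>
      have hlin : (derivative^[n - 1] P).natDegree = 1 := by rw [hdegk]; omega
      rw [roots_degree_eq_one (degree_eq_iff_natDegree_eq_of_pos one_pos |>.2 hlin), hlin]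
      simp
    | of_succ k hk ih =>
      rw [Function.iterate_succ_apply'] at ih
      refine natDegree_le_card_roots_toFinset_of_wronskian_pos (fun x => ?_) ih ?_
      · have h := hW (n - k - 1) (Finset.mem_Icc.2 ⟨by omega, by omega⟩) x
        rw [show n - (n - k - 1) - 1 = k by omega, show n - (n - k - 1) = k + 1 by omega,
          Function.iterate_succ_apply'] at h
        simp only [wronskian, eval_sub, eval_mul]
        linarith
      · rw [← Function.iterate_succ_apply' derivative, hdegk]
        omega
  exact hdeg ▸ card_roots_eq_natDegree_and_nodup (key 0 (Nat.zero_le _))
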